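/- arXiv:1505.04177 — 7 statements merged into one kernel-verified Lean document; each statement's English description precedes it below -/
import Mathlib

section
/- Let X(s,t) = γ(s) + A(t)V₂(s) + B(t)V₄(s) be a surface pencil with a = 1-κ₁A, b = κ₂A - κ₃B, and assume (A')² + (B')² > 0 and a² + b² > 0. Define N₁ = ((A')²+(B')²)^{-1/2}(-B'V₂ + A'V₄) and N₂ = (a²+b²)^{-1/2}(-bV₁ + aV₃). Then N₁ and N₂ are unit vectors, mutually orthogonal, and both orthogonal to the tangent vectors X_s and X_t. -/
/-- For the surface pencil, with tangent vectors `X_s = a V₁ + b V₃`,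
`X_t = A' V₂ + B' V₄` with respect to the orthonormal Frenet frame, the vectors
`N₁ = ((A')²+(B')²)^(-1/2)(-B' V₂ + A' V₄)` and `N₂ = (a²+b²)^(-1/2)(-b V₁ + a V₃)`
are unit, mutually orthogonal, and orthogonal to `X_s` and `X_t`. -/
theorem surface_pencil_normal_frame
    (V₁ V₂ V₃ V₄ : EuclideanSpace ℝ (Fin 4))
    (horth : ∀ i j : Fin 4,
      (inner ℝ (![V₁, V₂, V₃, V₄] i) (![V₁, V₂, V₃, V₄] j) : ℝ) = if i = j then 1 else 0)
    (a b A' B' : ℝ)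
    (hG : A' ^ 2 + B' ^ 2 > 0) (hE : a ^ 2 + b ^ 2 > 0)
    (N₁ N₂ Xs Xt : EuclideanSpace ℝ (Fin 4))
    (hN₁ : N₁ = (Real.sqrt (A' ^ 2 + B' ^ 2))⁻¹ • ((-B') • V₂ + A' • V₄))
    (hN₂ : N₂ = (Real.sqrt (a ^ 2 + b ^ 2))⁻¹ • ((-b) • V₁ + a • V₃))
    (hXs : Xs = a • V₁ + b • V₃)
    (hXt : Xt = A' • V₂ + B' • V₄) :
    ‖N₁‖ = 1 ∧ ‖N₂‖ = 1 ∧ (inner ℝ N₁ N₂ : ℝ) = 0 ∧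
    (inner ℝ N₁ Xs : ℝ) = 0 ∧ (inner ℝ N₁ Xt : ℝ) = 0 ∧
    (inner ℝ N₂ Xs : ℝ) = 0 ∧ (inner ℝ N₂ Xt : ℝ) = 0 := by
  have h11 := horth 0 0; have h12 := horth 0 1; have h13 := horth 0 2; have h14 := horth 0 3
  have h21 := horth 1 0; have h22 := horth 1 1; have h23 := horth 1 2; have h24 := horth 1 3
  have h31 := horth 2 0; have h32 := horth 2 1; have h33 := horth 2 2; have h34 := horth 2 3
  have h41 := horth 3 0; have h42 := horth 3 1; have h43 := horth 3 2; have h44 := horth 3 3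
  simp only [Matrix.cons_val_zero, Matrix.cons_val_one, Matrix.head_cons,
    Matrix.cons_val_two, Matrix.tail_cons, Matrix.cons_val_three, Matrix.head_fin_const,
    if_pos rfl, Fin.isValue, Fin.reduceEq, reduceIte] at h11 h12 h13 h14 h21 h22 h23 h24 h31 h32 h33 h34 h41 h42 h43 h44
  have hGs : Real.sqrt (A' ^ 2 + B' ^ 2) > 0 := Real.sqrt_pos.mpr hG
  have hEs : Real.sqrt (a ^ 2 + b ^ 2) > 0 := Real.sqrt_pos.mpr hE
  have sqG : Real.sqrt (A' ^ 2 + B' ^ 2) ^ 2 = A' ^ 2 + B' ^ 2 := Real.sq_sqrt hG.le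
  have sqE : Real.sqrt (a ^ 2 + b ^ 2) ^ 2 = a ^ 2 + b ^ 2 := Real.sq_sqrt hE.le
  subst hN₁ hN₂ hXs hXt
  have hv1 : ‖(-B') • V₂ + A' • V₄‖ = Real.sqrt (A' ^ 2 + B' ^ 2) := by
    rw [norm_eq_sqrt_real_inner]
    congr 1
    simp only [inner_add_add_self, real_inner_smul_left, real_inner_smul_right,
      h22, h24, h42, h44]
    ring
  have hv2 : ‖(-b) • V₁ + a • V₃‖ = Real.sqrt (a ^ 2 + b ^ 2) := by
    rw [norm_eq_sqrt_real_inner]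
    congr 1
    simp only [inner_add_add_self, real_inner_smul_left, real_inner_smul_right,
      h11, h13, h31, h33]
    ring
  refine ⟨?_, ?_, ?_, ?_, ?_, ?_, ?_⟩
  · rw [norm_smul, hv1, Real.norm_eq_abs, abs_inv, abs_of_pos hGs, inv_mul_cancel₀ hGs.ne']
  · rw [norm_smul, hv2, Real.norm_eq_abs, abs_inv, abs_of_pos hEs, inv_mul_cancel₀ hEs.ne']
  all_goals
    simp only [inner_smul_left, inner_smul_right, inner_add_left, inner_add_right,
      h11, h12, h13, h14, h21, h22, h23, h24, h31, h32, h33, h34, h41, h42, h43, h44,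
      RCLike.inner_apply, conj_trivial, map_inv₀, map_neg, Complex.conj_ofReal]
    ring
end

section
/- For the surface pencil X(s,t) = γ(s) + A(t)V₂(s) + B(t)V₄(s) with normal frame N₁ = ((A')²+(B')²)^{-1/2}(-B'V₂+A'V₄), N₂ = (a²+b²)^{-1/2}(-bV₁+aV₃), the second fundamental form coefficients are: ⟨X_ss,N₁⟩ = (A'bκ₃ - B'(κ₁a - κ₂b))/√((A')²+(B')²), ⟨X_st,N₁⟩ = 0, ⟨X_tt,N₁⟩ = (A'B'' - B'A'')/√((A')²+(B')²), ⟨X_ss,N₂⟩ = (ab_s - ba_s)/√(a²+b²), ⟨X_st,N₂⟩ = (ab_t - ba_t)/√(a²+b²), ⟨X_tt,N₂⟩ = 0. -/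
open scoped RealInnerProductSpace

theorem Orthonormal.inner_smul_add_fin_four {E : Type*} [NormedAddCommGroup E]
    [InnerProductSpace ℝ E] {V₁ V₂ V₃ V₄ : E} (hV : Orthonormal ℝ ![V₁, V₂, V₃, V₄])
    (c₁ c₂ c₃ c₄ d₁ d₂ d₃ d₄ : ℝ) :
    ⟪c₁ • V₁ + c₂ • V₂ + c₃ • V₃ + c₄ • V₄, d₁ • V₁ + d₂ • V₂ + d₃ • V₃ + d₄ • V₄⟫ =
      c₁ * d₁ + c₂ * d₂ + c₃ * d₃ + c₄ * d₄ := by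
  simpa [Fin.sum_univ_four, add_assoc] using
    hV.inner_sum ![c₁, c₂, c₃, c₄] ![d₁, d₂, d₃, d₄] Finset.univ

theorem surface_pencil_second_fundamental_form_general
    (V₁ V₂ V₃ V₄ : EuclideanSpace ℝ (Fin 4))
    (horth : ∀ i j : Fin 4,
      (inner ℝ (![V₁, V₂, V₃, V₄] i) (![V₁, V₂, V₃, V₄] j) : ℝ) = if i = j then 1 else 0)
    (a b A' B' A'' B'' κ₁ κ₂ κ₃ a_s b_s a_t b_t : ℝ)
    (N₁ N₂ Xss Xst Xtt : EuclideanSpace ℝ (Fin 4))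
    (hN₁ : N₁ = (Real.sqrt (A' ^ 2 + B' ^ 2))⁻¹ • ((-B') • V₂ + A' • V₄))
    (hN₂ : N₂ = (Real.sqrt (a ^ 2 + b ^ 2))⁻¹ • ((-b) • V₁ + a • V₃))
    (hXss : Xss = a_s • V₁ + (κ₁ * a - κ₂ * b) • V₂ + b_s • V₃ + (κ₃ * b) • V₄)
    (hXst : Xst = a_t • V₁ + b_t • V₃)
    (hXtt : Xtt = A'' • V₂ + B'' • V₄) :
    (inner ℝ Xss N₁ : ℝ) = (A' * b * κ₃ - B' * (κ₁ * a - κ₂ * b)) / Real.sqrt (A' ^ 2 + B' ^ 2) ∧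
    (inner ℝ Xst N₁ : ℝ) = 0 ∧
    (inner ℝ Xtt N₁ : ℝ) = (A' * B'' - B' * A'') / Real.sqrt (A' ^ 2 + B' ^ 2) ∧
    (inner ℝ Xss N₂ : ℝ) = (a * b_s - b * a_s) / Real.sqrt (a ^ 2 + b ^ 2) ∧
    (inner ℝ Xst N₂ : ℝ) = (a * b_t - b * a_t) / Real.sqrt (a ^ 2 + b ^ 2) ∧
    (inner ℝ Xtt N₂ : ℝ) = 0 := by
  have hV : Orthonormal ℝ ![V₁, V₂, V₃, V₄] := orthonormal_iff_ite.mpr horth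
  have hN₁' : N₁ = (Real.sqrt (A' ^ 2 + B' ^ 2))⁻¹ •
      ((0 : ℝ) • V₁ + (-B') • V₂ + (0 : ℝ) • V₃ + A' • V₄) := by rw [hN₁]; module
  have hN₂' : N₂ = (Real.sqrt (a ^ 2 + b ^ 2))⁻¹ •
      ((-b) • V₁ + (0 : ℝ) • V₂ + a • V₃ + (0 : ℝ) • V₄) := by rw [hN₂]; module
  have hXst' : Xst = a_t • V₁ + (0 : ℝ) • V₂ + b_t • V₃ + (0 : ℝ) • V₄ := by rw [hXst]; module
  have hXtt' : Xtt = (0 : ℝ) • V₁ + A'' • V₂ + (0 : ℝ) • V₃ + B'' • V₄ := by rw [hXtt]; module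
  simp only [hN₁', hN₂', hXss, hXst', hXtt', real_inner_smul_right, hV.inner_smul_add_fin_four]
  refine ⟨?_, ?_, ?_, ?_, ?_, ?_⟩ <;> ring

/-- Second fundamental form coefficients of the surface pencil, computed
as inner products of the Frenet expansions of `X_ss`, `X_st`, `X_tt` with the normal
frame `N₁, N₂`. -/
theorem surface_pencil_second_fundamental_form
    (V₁ V₂ V₃ V₄ : EuclideanSpace ℝ (Fin 4))
    (horth : ∀ i j : Fin 4,
      (inner ℝ (![V₁, V₂, V₃, V₄] i) (![V₁, V₂, V₃, V₄] j) : ℝ) = if i = j then 1 else 0)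
    (a b A' B' A'' B'' κ₁ κ₂ κ₃ a_s b_s a_t b_t : ℝ)
    (hG : A' ^ 2 + B' ^ 2 > 0) (hE : a ^ 2 + b ^ 2 > 0)
    (N₁ N₂ Xss Xst Xtt : EuclideanSpace ℝ (Fin 4))
    (hN₁ : N₁ = (Real.sqrt (A' ^ 2 + B' ^ 2))⁻¹ • ((-B') • V₂ + A' • V₄))
    (hN₂ : N₂ = (Real.sqrt (a ^ 2 + b ^ 2))⁻¹ • ((-b) • V₁ + a • V₃))
    (hXss : Xss = a_s • V₁ + (κ₁ * a - κ₂ * b) • V₂ + b_s • V₃ + (κ₃ * b) • V₄)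
    (hXst : Xst = a_t • V₁ + b_t • V₃)
    (hXtt : Xtt = A'' • V₂ + B'' • V₄) :
    (inner ℝ Xss N₁ : ℝ) = (A' * b * κ₃ - B' * (κ₁ * a - κ₂ * b)) / Real.sqrt (A' ^ 2 + B' ^ 2) ∧
    (inner ℝ Xst N₁ : ℝ) = 0 ∧
    (inner ℝ Xtt N₁ : ℝ) = (A' * B'' - B' * A'') / Real.sqrt (A' ^ 2 + B' ^ 2) ∧
    (inner ℝ Xss N₂ : ℝ) = (a * b_s - b * a_s) / Real.sqrt (a ^ 2 + b ^ 2) ∧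
    (inner ℝ Xst N₂ : ℝ) = (a * b_t - b * a_t) / Real.sqrt (a ^ 2 + b ^ 2) ∧
    (inner ℝ Xtt N₂ : ℝ) = 0 :=
  surface_pencil_second_fundamental_form_general V₁ V₂ V₃ V₄ horth a b A' B' A'' B'' κ₁ κ₂ κ₃ a_s
    b_s a_t b_t N₁ N₂ Xss Xst Xtt hN₁ hN₂ hXss hXst hXtt
end

section
/- For the surface pencil X(s,t) = γ(s) + A(t)V₂(s) + B(t)V₄(s), the Gaussian curvature K = (c₁₁¹c₂₂¹ - (c₁₂¹)² + c₁₁²c₂₂² - (c₁₂²)²)/(EG - F²) equals [(a²+b²)(A'B'' - B'A''){A'bκ₃ - B'(κ₁a - κ₂b)} - ((A')²+(B')²)(ab_t - ba_t)²] / g², where g = (a²+b²)((A')²+(B')²). -/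
/-!
Since `c₁₂¹ = c₂₂² = 0` and the remaining coefficients are quotients by `√E` or `√G`, the numerator
of `K` is `c₁₁¹c₂₂¹ - (c₁₂²)² = pq/G - r²/E`, where `p, q, r` are the numerators of
`c₁₁¹, c₂₂¹, c₁₂²`; over the common denominator `EG` this is the stated formula. `E` and `G` are
sums of squares, so the square roots square back, and when `EG = 0` both sides are `0` by the
convention `x / 0 = 0`.
-/

lemma div_sqrt_mul_div_sqrt {G : ℝ} (hG : 0 ≤ G) (x y : ℝ) :
    x / √G * (y / √G) = x * y / G := by
  rw [div_mul_div_comm, Real.mul_self_sqrt hG]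

lemma div_sqrt_sq {E : ℝ} (hE : 0 ≤ E) (z : ℝ) : (z / √E) ^ 2 = z ^ 2 / E := by
  rw [div_pow, Real.sq_sqrt hE]

lemma div_sub_div_div_mul {𝕜 : Type*} [Field 𝕜] (E G p q : 𝕜) :
    (p / G - q / E) / (E * G) = (E * p - G * q) / (E * G) ^ 2 := by
  rcases eq_or_ne E 0 with rfl | hE
  · simp
  rcases eq_or_ne G 0 with rfl | hG
  · simp
  field_simp

theorem surface_pencil_gaussian_curvature_general
    (a b A' B' A'' B'' κ₁ κ₂ κ₃ a_t b_t E F G g K : ℝ)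
    (hE : E = a ^ 2 + b ^ 2)
    (hF : F = 0)
    (hG : G = A' ^ 2 + B' ^ 2)
    (hg : g = E * G)
    (c111 c121 c221 c112 c122 c222 : ℝ)
    (hc111 : c111 = (A' * b * κ₃ - B' * (κ₁ * a - κ₂ * b)) / Real.sqrt G)
    (hc121 : c121 = 0)
    (hc221 : c221 = (A' * B'' - B' * A'') / Real.sqrt G)
    (hc122 : c122 = (a * b_t - b * a_t) / Real.sqrt E)
    (hc222 : c222 = 0)
    (hK : K = (c111 * c221 - c121 ^ 2 + c112 * c222 - c122 ^ 2) / (E * G - F ^ 2)) :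
    K = ((a ^ 2 + b ^ 2) * (A' * B'' - B' * A'') *
          (A' * b * κ₃ - B' * (κ₁ * a - κ₂ * b)) -
        (A' ^ 2 + B' ^ 2) * (a * b_t - b * a_t) ^ 2) / g ^ 2 := by
  have hE0 : 0 ≤ E := hE ▸ by positivity
  have hG0 : 0 ≤ G := hG ▸ by positivity
  subst hK hc111 hc121 hc221 hc122 hc222 hF hg
  rw [div_sqrt_mul_div_sqrt hG0, div_sqrt_sq hE0, ← hE, ← hG]
  convert div_sub_div_div_mul E G
    ((A' * b * κ₃ - B' * (κ₁ * a - κ₂ * b)) * (A' * B'' - B' * A'')) ((a * b_t - b * a_t) ^ 2)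
    using 2 <;> ring

/-- The Gaussian curvature of the surface pencil, computed from the
second fundamental form coefficients, equals the explicit formula (B3). -/
theorem surface_pencil_gaussian_curvature
    (a b A' B' A'' B'' κ₁ κ₂ κ₃ a_s b_s a_t b_t E F G g K : ℝ)
    (hE : E = a ^ 2 + b ^ 2) (hEpos : 0 < E)
    (hF : F = 0)
    (hG : G = A' ^ 2 + B' ^ 2) (hGpos : 0 < G)
    (hg : g = E * G)
    (c111 c121 c221 c112 c122 c222 : ℝ)
    (hc111 : c111 = (A' * b * κ₃ - B' * (κ₁ * a - κ₂ * b)) / Real.sqrt G)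
    (hc121 : c121 = 0)
    (hc221 : c221 = (A' * B'' - B' * A'') / Real.sqrt G)
    (hc112 : c112 = (a * b_s - b * a_s) / Real.sqrt E)
    (hc122 : c122 = (a * b_t - b * a_t) / Real.sqrt E)
    (hc222 : c222 = 0)
    (hK : K = (c111 * c221 - c121 ^ 2 + c112 * c222 - c122 ^ 2) / (E * G - F ^ 2)) :
    K = ((a ^ 2 + b ^ 2) * (A' * B'' - B' * A'') *
          (A' * b * κ₃ - B' * (κ₁ * a - κ₂ * b)) -
        (A' ^ 2 + B' ^ 2) * (a * b_t - b * a_t) ^ 2) / g ^ 2 :=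
  surface_pencil_gaussian_curvature_general a b A' B' A'' B'' κ₁ κ₂ κ₃ a_t b_t E F G g K hE hF hG hg
    c111 c121 c221 c112 c122 c222 hc111 hc121 hc221 hc122 hc222 hK
end

section
/- For the surface pencil X(s,t) = γ(s) + A(t)V₂(s) + B(t)V₄(s), the mean curvature vector is H = (1/(2EG^{3/2}))[E(A'B''-B'A'') + G(A'bκ₃-B'(κ₁a-κ₂b))]N₁ + (1/(2E^{3/2}))(ab_s-ba_s)N₂, and its squared norm is ‖H‖² = (1/4)[(ab_s-ba_s)²/E³ + (1/G)((A'B''-B'A'')/G + (A'bκ₃-B'(κ₁a-κ₂b))/E)²]. -/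
/-- The mean curvature vector of the surface pencil and its squared norm. -/
theorem surface_pencil_mean_curvature
    (a b A' B' A'' B'' κ₁ κ₂ κ₃ a_s b_s a_t b_t E F G : ℝ)
    (hE : E = a ^ 2 + b ^ 2) (hEpos : 0 < E)
    (hF : F = 0)
    (hG : G = A' ^ 2 + B' ^ 2) (hGpos : 0 < G)
    (N₁ N₂ : EuclideanSpace ℝ (Fin 4))
    (hN₁ : ‖N₁‖ = 1) (hN₂ : ‖N₂‖ = 1) (hN₁₂ : (inner ℝ N₁ N₂ : ℝ) = 0)
    (c111 c121 c221 c112 c122 c222 : ℝ)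
    (hc111 : c111 = (A' * b * κ₃ - B' * (κ₁ * a - κ₂ * b)) / Real.sqrt G)
    (hc121 : c121 = 0)
    (hc221 : c221 = (A' * B'' - B' * A'') / Real.sqrt G)
    (hc112 : c112 = (a * b_s - b * a_s) / Real.sqrt E)
    (hc122 : c122 = (a * b_t - b * a_t) / Real.sqrt E)
    (hc222 : c222 = 0)
    (H : EuclideanSpace ℝ (Fin 4))
    (hH : H = (1 / (2 * (E * G - F ^ 2))) •
      ((c111 * G + c221 * E - 2 * c121 * F) • N₁ + (c112 * G + c222 * E - 2 * c122 * F) • N₂)) :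
    H = (1 / (2 * E * (G * Real.sqrt G)) *
          (E * (A' * B'' - B' * A'') + G * (A' * b * κ₃ - B' * (κ₁ * a - κ₂ * b)))) • N₁ +
        (1 / (2 * (E * Real.sqrt E)) * (a * b_s - b * a_s)) • N₂ ∧
    ‖H‖ ^ 2 = (1 / 4) * ((a * b_s - b * a_s) ^ 2 / E ^ 3 +
        (1 / G) * ((A' * B'' - B' * A'') / G +
          (A' * b * κ₃ - B' * (κ₁ * a - κ₂ * b)) / E) ^ 2) := by
  have hEne : E ≠ 0 := ne_of_gt hEpos
  have hGne : G ≠ 0 := ne_of_gt hGpos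
  set sE := Real.sqrt E with hsE
  set sG := Real.sqrt G with hsG
  have hsEpos : 0 < sE := Real.sqrt_pos.mpr hEpos
  have hsGpos : 0 < sG := Real.sqrt_pos.mpr hGpos
  have hsEne : sE ≠ 0 := ne_of_gt hsEpos
  have hsGne : sG ≠ 0 := ne_of_gt hsGpos
  have hE2 : sE ^ 2 = E := Real.sq_sqrt hEpos.le
  have hG2 : sG ^ 2 = G := Real.sq_sqrt hGpos.le
  set x := 1 / (2 * E * (G * sG)) *
      (E * (A' * B'' - B' * A'') + G * (A' * b * κ₃ - B' * (κ₁ * a - κ₂ * b))) with hx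
  set y := 1 / (2 * (E * sE)) * (a * b_s - b * a_s) with hy
  have hH' : H = x • N₁ + y • N₂ := by
    rw [hH, smul_add, smul_smul, smul_smul]
    congr 1
    · congr 1
      rw [hc111, hc221, hc121, hF, hx, ← hE2, ← hG2]
      field_simp
      ring
    · congr 1
      rw [hc112, hc222, hc122, hF, hy, ← hE2, ← hG2]
      field_simp
      ring
  refine ⟨hH', ?_⟩
  have hnorm : ‖H‖ ^ 2 = x ^ 2 + y ^ 2 := by
    rw [hH']
    rw [← real_inner_self_eq_norm_sq]
    have hN₂₁ : (inner ℝ N₂ N₁ : ℝ) = 0 := by rw [real_inner_comm]; exact hN₁₂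
    simp only [inner_add_add_self, real_inner_smul_left, real_inner_smul_right,
      hN₁₂, hN₂₁, real_inner_self_eq_norm_sq, hN₁, hN₂,
      norm_smul, Real.norm_eq_abs, mul_pow, sq_abs, one_pow]
    ring
  rw [hnorm, hx, hy, ← hE2, ← hG2]
  field_simp
  ring
end

section
/- Let γ be the W-curve γ(s) = (a cos s, a sin s, b cos s, b sin s)-type generator with parameters a,b and c = d = 1, with constant first curvature κ₁. If the marching-scale functions are A(t) = -(aκ₁(r(t)cos t - a) + bκ₁(r(t)sin t - b))/(a²+b²) and B(t) = (bκ₁(r(t)cos t - a) - aκ₁(r(t)sin t - b))/(a²+b²), then the surface pencil X(s,t) = γ(s) + A(t)V₂(s) + B(t)V₄(s) coincides with the Vranceanu surface X(s,t) = (r(t)cos t cos s, r(t)cos t sin s, r(t)sin t cos s, r(t)sin t sin s). -/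
/-!
Since `V₂ = -γ/κ₁`, the pencil at `(s, t)` is `(1 - A/κ₁) γ(s) + (B/κ₁) W(s)`, with `W(s)` the
vector `(b cos s, b sin s, -a cos s, -a sin s)`; its coordinates are `f (cos s, sin s)` and
`g (cos s, sin s)` for `f = a + (bB - aA)/κ₁`, `g = b + (-bA - aB)/κ₁`. This affine map
`(A, B) ↦ (f, g)` has linear part of determinant `(a² + b²)/κ₁²`, and the given `A, B` are its
inverse evaluated at `f = r cos t`, `g = r sin t`, which are exactly the Vranceanu coordinates.
-/

open Real

theorem pencil_eq_of_frenet (a b κ A B s : ℝ) (p n₂ n₄ : EuclideanSpace ℝ (Fin 4))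
    (hp : p = ![a * cos s, a * sin s, b * cos s, b * sin s])
    (hn₂ : n₂ = (-κ⁻¹) • p)
    (hn₄ : n₄ = κ⁻¹ • (WithLp.toLp 2 ![b * cos s, b * sin s, -a * cos s, -a * sin s] :
      EuclideanSpace ℝ (Fin 4))) :
    p + A • n₂ + B • n₄ =
      ![(a + (b * B - a * A) / κ) * cos s, (a + (b * B - a * A) / κ) * sin s,
        (b + (-b * A - a * B) / κ) * cos s, (b + (-b * A - a * B) / κ) * sin s] := by
  subst hn₂ hn₄
  ext i
  fin_cases i <;>
    simp only [hp, WithLp.ofLp_smul, Pi.add_apply, Pi.smul_apply,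
      smul_eq_mul, Fin.zero_eta, Fin.mk_one, Fin.reduceFinMk, Matrix.cons_val] <;>
    ring

theorem marching_scale_inverse (a b κ f g A B : ℝ) (hκ : κ ≠ 0) (hab : a ^ 2 + b ^ 2 ≠ 0)
    (hA : A = -(a * κ * (f - a) + b * κ * (g - b)) / (a ^ 2 + b ^ 2))
    (hB : B = (b * κ * (f - a) - a * κ * (g - b)) / (a ^ 2 + b ^ 2)) :
    a + (b * B - a * A) / κ = f ∧ b + (-b * A - a * B) / κ = g := by
  subst hA hB
  constructor <;> field_simp <;> ring

theorem surface_pencil_vranceanu_general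
    (a b : ℝ) (hunit : a ^ 2 + b ^ 2 = 1)
    (γ V₂ V₄ : ℝ → EuclideanSpace ℝ (Fin 4))
    (hγ : ∀ s, γ s = ![a * cos s, a * sin s, b * cos s, b * sin s])
    (κ₁ : ℝ) (hκ₁ : κ₁ = Real.sqrt (a ^ 2 + b ^ 2))
    -- the normal and second binormal of the Frenet frame of γ
    (hV₂ : ∀ s, V₂ s = (-κ₁⁻¹) • γ s)
    (hV₄ : ∀ s, V₄ s = κ₁⁻¹ • (WithLp.toLp 2 ![b * cos s, b * sin s, -a * cos s, -a * sin s] :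
      EuclideanSpace ℝ (Fin 4)))
    (r A B : ℝ → ℝ)
    (hA : ∀ t, A t = -(a * κ₁ * (r t * cos t - a) + b * κ₁ * (r t * sin t - b)) /
      (a ^ 2 + b ^ 2))
    (hB : ∀ t, B t = (b * κ₁ * (r t * cos t - a) - a * κ₁ * (r t * sin t - b)) /
      (a ^ 2 + b ^ 2)) :
    ∀ s t, γ s + A t • V₂ s + B t • V₄ s =
      ![r t * cos t * cos s, r t * cos t * sin s, r t * sin t * cos s, r t * sin t * sin s] := by
  have hκ₁_one : κ₁ = 1 := by rw [hκ₁, hunit, sqrt_one]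
  intro s t
  obtain ⟨hf, hg⟩ := marching_scale_inverse a b κ₁ (r t * cos t) (r t * sin t) (A t) (B t)
    (by simp [hκ₁_one]) (by simp [hunit]) (hA t) (hB t)
  rw [pencil_eq_of_frenet a b κ₁ (A t) (B t) s _ _ _ (hγ s) (hV₂ s) (hV₄ s), hf, hg]

/-- For the W-curve `γ(s) = (a cos s, a sin s, b cos s, b sin s)` with
`a² + b² = 1` and the marching-scale functions
`A(t) = -(aκ₁(r cos t - a) + bκ₁(r sin t - b))/(a²+b²)`,
`B(t) = (bκ₁(r cos t - a) - aκ₁(r sin t - b))/(a²+b²)`,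
the surface pencil coincides with the Vranceanu surface
`(r cos t cos s, r cos t sin s, r sin t cos s, r sin t sin s)`. -/
theorem surface_pencil_vranceanu
    (a b : ℝ) (ha : 0 < a) (hb : 0 < b) (hunit : a ^ 2 + b ^ 2 = 1)
    (γ V₂ V₄ : ℝ → EuclideanSpace ℝ (Fin 4))
    (hγ : ∀ s, γ s = ![a * cos s, a * sin s, b * cos s, b * sin s])
    (κ₁ : ℝ) (hκ₁ : κ₁ = Real.sqrt (a ^ 2 + b ^ 2))
    -- the normal and second binormal of the Frenet frame of γ
    (hV₂ : ∀ s, V₂ s = (-κ₁⁻¹) • γ s)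
    (hV₄ : ∀ s, V₄ s = κ₁⁻¹ • (WithLp.toLp 2 ![b * cos s, b * sin s, -a * cos s, -a * sin s] :
      EuclideanSpace ℝ (Fin 4)))
    (r A B : ℝ → ℝ)
    (hA : ∀ t, A t = -(a * κ₁ * (r t * cos t - a) + b * κ₁ * (r t * sin t - b)) /
      (a ^ 2 + b ^ 2))
    (hB : ∀ t, B t = (b * κ₁ * (r t * cos t - a) - a * κ₁ * (r t * sin t - b)) /
      (a ^ 2 + b ^ 2)) :
    ∀ s t, γ s + A t • V₂ s + B t • V₄ s =
      ![r t * cos t * cos s, r t * cos t * sin s, r t * sin t * cos s, r t * sin t * sin s] :=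
  surface_pencil_vranceanu_general a b hunit γ V₂ V₄ hγ κ₁ hκ₁ hV₂ hV₄ r A B hA hB
end

section
/- With A(t) = r(t)cos t, B(t) = r(t)sin t, a = 1 - κ₁A, b = κ₂A - κ₃B, the flatness conditions A'B'' - B'A'' = 0 and a b_t - b a_t = 0 together imply the pair of equations: 2(r')² - r r'' + r² = 0 and κ₁κ₃ r² + (r'κ₂ - rκ₃)cos t - (r'κ₃ + rκ₂)sin t = 0 (at each point (s,t) with r(t) ≠ 0). -/
open Real

/-!
Both conditions are identities in `r, r', r''` once the trigonometric factors collapse via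
`sin² + cos² = 1`: `A'B'' - B'A''` is the polar curvature numerator `r² + 2r'² - r r''`, and
`a b_t - b a_t = κ₂A' - κ₃B' + κ₁κ₃(AB' - BA')` with `AB' - BA' = r²`.
-/

section PolarDerivatives

variable {r : ℝ → ℝ} {t : ℝ}

theorem deriv_mul_cos (hr : DifferentiableAt ℝ r t) :
    deriv (fun t => r t * cos t) t = deriv r t * cos t - r t * sin t := by
  rw [deriv_fun_mul hr (differentiable_cos t), Real.deriv_cos]
  ring

theorem deriv_mul_sin (hr : DifferentiableAt ℝ r t) :
    deriv (fun t => r t * sin t) t = deriv r t * sin t + r t * cos t := by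
  rw [deriv_fun_mul hr (differentiable_sin t), Real.deriv_sin]

theorem deriv_deriv_mul_cos (hr : Differentiable ℝ r) (hr' : DifferentiableAt ℝ (deriv r) t) :
    deriv (deriv fun t => r t * cos t) t =
      deriv (deriv r) t * cos t - 2 * deriv r t * sin t - r t * cos t := by
  have hA' : deriv (fun t => r t * cos t) = fun t => deriv r t * cos t - r t * sin t :=
    funext fun t => deriv_mul_cos (hr t)
  rw [hA', deriv_fun_sub (hr'.fun_mul (differentiable_cos t))
      ((hr t).fun_mul (differentiable_sin t)),
    deriv_mul_cos hr', deriv_mul_sin (hr t)]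
  ring

theorem deriv_deriv_mul_sin (hr : Differentiable ℝ r) (hr' : DifferentiableAt ℝ (deriv r) t) :
    deriv (deriv fun t => r t * sin t) t =
      deriv (deriv r) t * sin t + 2 * deriv r t * cos t - r t * sin t := by
  have hB' : deriv (fun t => r t * sin t) = fun t => deriv r t * sin t + r t * cos t :=
    funext fun t => deriv_mul_sin (hr t)
  rw [hB', deriv_fun_add (hr'.fun_mul (differentiable_sin t))
      ((hr t).fun_mul (differentiable_cos t)),
    deriv_mul_sin hr', deriv_mul_cos (hr t)]
  ring

end PolarDerivatives

/-- With `A = r cos`, `B = r sin`, `a = 1 - κ₁A`, `b = κ₂A - κ₃B`, the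
flatness conditions `A'B'' - B'A'' = 0` and `a b_t - b a_t = 0` imply the system
`2(r')² - r r'' + r² = 0` and `κ₁κ₃r² + (r'κ₂ - rκ₃)cos t - (r'κ₃ + rκ₂)sin t = 0`. -/
theorem polar_flatness_system
    (κ₁ κ₂ κ₃ : ℝ → ℝ)
    (r : ℝ → ℝ) (hr : ContDiff ℝ 2 r)
    (A B : ℝ → ℝ)
    (hA : ∀ t, A t = r t * cos t) (hB : ∀ t, B t = r t * sin t)
    (a b : ℝ → ℝ → ℝ)
    (ha : ∀ s t, a s t = 1 - κ₁ s * A t)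
    (hb : ∀ s t, b s t = κ₂ s * A t - κ₃ s * B t)
    (hflat₁ : ∀ t, deriv A t * deriv (deriv B) t - deriv B t * deriv (deriv A) t = 0)
    (hflat₂ : ∀ s t,
      a s t * deriv (fun τ => b s τ) t - b s t * deriv (fun τ => a s τ) t = 0) :
    ∀ s t, r t ≠ 0 →
      2 * (deriv r t) ^ 2 - r t * deriv (deriv r) t + (r t) ^ 2 = 0 ∧
      κ₁ s * κ₃ s * (r t) ^ 2 + (deriv r t * κ₂ s - r t * κ₃ s) * cos t -
        (deriv r t * κ₃ s + r t * κ₂ s) * sin t = 0 := by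
  intro s t _
  have hr₁ : Differentiable ℝ r := hr.differentiable (by norm_num)
  have hr₂ : Differentiable ℝ (deriv r) := hr.differentiable_deriv_two
  obtain rfl : A = fun t => r t * cos t := funext hA
  obtain rfl : B = fun t => r t * sin t := funext hB
  have hAd : Differentiable ℝ fun t => r t * cos t := hr₁.mul differentiable_cos
  have hBd : Differentiable ℝ fun t => r t * sin t := hr₁.mul differentiable_sin
  have ha' : deriv (fun τ => a s τ) t = -(κ₁ s * deriv (fun t => r t * cos t) t) := by
    simp only [ha]
    rw [deriv_const_sub, deriv_const_mul _ (hAd t)]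
  have hb' : deriv (fun τ => b s τ) t =
      κ₂ s * deriv (fun t => r t * cos t) t - κ₃ s * deriv (fun t => r t * sin t) t := by
    simp only [hb]
    rw [deriv_fun_sub ((hAd t).const_mul _) ((hBd t).const_mul _),
      deriv_const_mul _ (hAd t), deriv_const_mul _ (hBd t)]
  have flat₁ := hflat₁ t
  have flat₂ := hflat₂ s t
  rw [deriv_deriv_mul_cos hr₁ (hr₂ t), deriv_deriv_mul_sin hr₁ (hr₂ t),
    deriv_mul_cos (hr₁ t), deriv_mul_sin (hr₁ t)] at flat₁
  rw [ha', hb', ha, hb, deriv_mul_cos (hr₁ t), deriv_mul_sin (hr₁ t)] at flat₂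
  constructor
  · linear_combination flat₁ -
      (2 * deriv r t ^ 2 - r t * deriv (deriv r) t + r t ^ 2) * sin_sq_add_cos_sq t
  · linear_combination flat₂ - κ₁ s * κ₃ s * r t ^ 2 * sin_sq_add_cos_sq t
end

section
/- Suppose the profile curve γ ⊂ ℝ⁴ has curvatures satisfying κ₃(s) = c₁κ₂(s)/(c₂ + κ₁(s)) for constants c₁, c₂ (with c₂ + κ₁(s) ≠ 0), and let r(t) = 1/(c₁ sin t - c₂ cos t). Then with A(t) = r(t)cos t and B(t) = r(t)sin t, both flatness conditions hold: 2(r')² - r r'' + r² = 0 and κ₁κ₃r² + (r'κ₂ - rκ₃)cos t - (r'κ₃ + rκ₂)sin t = 0; hence the surface pencil X(s,t) = γ(s) + A(t)V₂(s) + B(t)V₄(s) is flat. -/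
/-!
Write `G t = c₁ sin t - c₂ cos t`, so `G'' = -G` and `r = 1/G`. The first flatness condition is
`(1/r)'' + 1/r = 0` multiplied by `r³`. Since `A = cos/G` and `B = sin/G` have derivatives
`A' = -c₁/G²`, `B' = -c₂/G²`, the velocity `(A', B')` keeps the fixed direction `(c₁, c₂)`, so
`A'B'' - B'A'' = 0`. Using moreover `AB' - BA' = 1/G²` and `sin² + cos² = 1`, the second condition
and `a b_t - b a_t` both become `G⁻²` times `κ₃ (c₂ + κ₁) - c₁ κ₂ = 0`. Both terms of the numerator
of `K` then vanish.
-/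

open Real Filter Topology

theorem hasDerivAt_sin_sub_cos (c₁ c₂ t : ℝ) :
    HasDerivAt (fun x => c₁ * sin x - c₂ * cos x) (c₁ * cos t + c₂ * sin t) t := by
  simpa using ((hasDerivAt_sin t).const_mul c₁).fun_sub ((hasDerivAt_cos t).const_mul c₂)

theorem hasDerivAt_cos_add_sin (c₁ c₂ t : ℝ) :
    HasDerivAt (fun x => c₁ * cos x + c₂ * sin x) (-(c₁ * sin t - c₂ * cos t)) t := by
  refine (((hasDerivAt_cos t).const_mul c₁).fun_add ((hasDerivAt_sin t).const_mul c₂)).congr_deriv ?_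
  ring

theorem deriv_inv_ode_of_harmonic {u u' : ℝ → ℝ} (hu : ∀ x, HasDerivAt u (u' x) x)
    (hu' : ∀ x, HasDerivAt u' (-u x) x) {t : ℝ} (ht : u t ≠ 0) :
    2 * deriv (fun x => (u x)⁻¹) t ^ 2 - (u t)⁻¹ * deriv (deriv fun x => (u x)⁻¹) t
      + (u t)⁻¹ ^ 2 = 0 := by
  have hr' : deriv (fun x => (u x)⁻¹) =ᶠ[𝓝 t] fun x => -u' x / u x ^ 2 := by
    filter_upwards [(hu t).continuousAt.eventually_ne ht] with x hx
    exact ((hu x).inv hx).deriv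
  have hr'' := ((hu' t).fun_neg.fun_div ((hu t).fun_pow 2) (pow_ne_zero 2 ht)).deriv
  rw [hr'.eq_of_nhds, hr'.deriv_eq, hr'']
  field_simp
  ring

theorem hasDerivAt_cos_div_sin_sub_cos {c₁ c₂ t : ℝ} (ht : c₁ * sin t - c₂ * cos t ≠ 0) :
    HasDerivAt (fun x => cos x / (c₁ * sin x - c₂ * cos x))
      (-c₁ / (c₁ * sin t - c₂ * cos t) ^ 2) t := by
  refine (hasDerivAt_cos t).fun_div (hasDerivAt_sin_sub_cos c₁ c₂ t) ht |>.congr_deriv ?_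
  congr 1
  linear_combination -c₁ * sin_sq_add_cos_sq t

theorem hasDerivAt_sin_div_sin_sub_cos {c₁ c₂ t : ℝ} (ht : c₁ * sin t - c₂ * cos t ≠ 0) :
    HasDerivAt (fun x => sin x / (c₁ * sin x - c₂ * cos x))
      (-c₂ / (c₁ * sin t - c₂ * cos t) ^ 2) t := by
  refine (hasDerivAt_sin t).fun_div (hasDerivAt_sin_sub_cos c₁ c₂ t) ht |>.congr_deriv ?_
  congr 1
  linear_combination -c₂ * sin_sq_add_cos_sq t

theorem deriv_mul_deriv_deriv_sub_eq_zero {A B h : ℝ → ℝ} {p q t : ℝ}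
    (hA : deriv A =ᶠ[𝓝 t] fun x => p * h x) (hB : deriv B =ᶠ[𝓝 t] fun x => q * h x) :
    deriv A t * deriv (deriv B) t - deriv B t * deriv (deriv A) t = 0 := by
  rw [hA.eq_of_nhds, hB.eq_of_nhds, hA.deriv_eq, hB.deriv_eq, deriv_const_mul_field',
    deriv_const_mul_field']
  ring

theorem pencil_wronskian_eq {A B : ℝ → ℝ} {A' B' t : ℝ} (hA : HasDerivAt A A' t)
    (hB : HasDerivAt B B' t) (κ₁ κ₂ κ₃ : ℝ) :
    (1 - κ₁ * A t) * deriv (fun τ => κ₂ * A τ - κ₃ * B τ) t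
        - (κ₂ * A t - κ₃ * B t) * deriv (fun τ => 1 - κ₁ * A τ) t
      = κ₂ * A' - κ₃ * B' + κ₁ * κ₃ * (A t * B' - B t * A') := by
  rw [((hA.const_mul κ₂).fun_sub (hB.const_mul κ₃)).deriv, ((hA.const_mul κ₁).const_sub 1).deriv]
  ring

section

variable {c₁ c₂ t : ℝ}

theorem deriv_cos_div_mul_deriv_deriv_sin_div_sub_eq_zero (ht : c₁ * sin t - c₂ * cos t ≠ 0) :
    deriv (fun x => cos x / (c₁ * sin x - c₂ * cos x)) t
        * deriv (deriv fun x => sin x / (c₁ * sin x - c₂ * cos x)) t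
      - deriv (fun x => sin x / (c₁ * sin x - c₂ * cos x)) t
        * deriv (deriv fun x => cos x / (c₁ * sin x - c₂ * cos x)) t = 0 := by
  have hG_ne : ∀ᶠ x in 𝓝 t, c₁ * sin x - c₂ * cos x ≠ 0 :=
    (hasDerivAt_sin_sub_cos c₁ c₂ t).continuousAt.eventually_ne ht
  exact deriv_mul_deriv_deriv_sub_eq_zero (h := fun x => ((c₁ * sin x - c₂ * cos x) ^ 2)⁻¹)
    (hG_ne.mono fun x hx => (hasDerivAt_cos_div_sin_sub_cos hx).deriv.trans (div_eq_mul_inv _ _))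
    (hG_ne.mono fun x hx => (hasDerivAt_sin_div_sin_sub_cos hx).deriv.trans (div_eq_mul_inv _ _))

variable {κ₁ κ₂ κ₃ : ℝ}

theorem pencil_wronskian_cos_div_sin_div_eq_zero (ht : c₁ * sin t - c₂ * cos t ≠ 0)
    (hκ : κ₃ * (c₂ + κ₁) = c₁ * κ₂) :
    (1 - κ₁ * (cos t / (c₁ * sin t - c₂ * cos t)))
        * deriv (fun τ => κ₂ * (cos τ / (c₁ * sin τ - c₂ * cos τ))
          - κ₃ * (sin τ / (c₁ * sin τ - c₂ * cos τ))) t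
      - (κ₂ * (cos t / (c₁ * sin t - c₂ * cos t)) - κ₃ * (sin t / (c₁ * sin t - c₂ * cos t)))
        * deriv (fun τ => 1 - κ₁ * (cos τ / (c₁ * sin τ - c₂ * cos τ))) t = 0 := by
  rw [pencil_wronskian_eq (hasDerivAt_cos_div_sin_sub_cos ht) (hasDerivAt_sin_div_sin_sub_cos ht)]
  field_simp
  linear_combination (c₁ * sin t - c₂ * cos t) * hκ

theorem inv_sin_sub_cos_second_flatness (ht : c₁ * sin t - c₂ * cos t ≠ 0)
    (hκ : κ₃ * (c₂ + κ₁) = c₁ * κ₂) :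
    κ₁ * κ₃ * (c₁ * sin t - c₂ * cos t)⁻¹ ^ 2
      + (deriv (fun x => (c₁ * sin x - c₂ * cos x)⁻¹) t * κ₂ - (c₁ * sin t - c₂ * cos t)⁻¹ * κ₃)
        * cos t
      - (deriv (fun x => (c₁ * sin x - c₂ * cos x)⁻¹) t * κ₃ + (c₁ * sin t - c₂ * cos t)⁻¹ * κ₂)
        * sin t = 0 := by
  rw [((hasDerivAt_sin_sub_cos c₁ c₂ t).fun_inv ht).deriv]
  field_simp
  linear_combination hκ + (c₂ * κ₃ - c₁ * κ₂) * sin_sq_add_cos_sq t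

end

/-- If `κ₃ = c₁κ₂/(c₂ + κ₁)` and `r(t) = 1/(c₁ sin t - c₂ cos t)`, then
with `A = r cos`, `B = r sin` both flatness conditions hold, hence the surface pencil
is flat (its Gaussian curvature vanishes). -/
theorem flat_pencil_case_ii
    (κ₁ κ₂ κ₃ : ℝ → ℝ) (c₁ c₂ : ℝ)
    (hκ : ∀ s, c₂ + κ₁ s ≠ 0)
    (hκ₃ : ∀ s, κ₃ s = c₁ * κ₂ s / (c₂ + κ₁ s))
    (r : ℝ → ℝ) (hr : ∀ t, r t = (c₁ * sin t - c₂ * cos t)⁻¹)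
    (A B : ℝ → ℝ)
    (hA : ∀ t, A t = r t * cos t) (hB : ∀ t, B t = r t * sin t)
    (a b : ℝ → ℝ → ℝ)
    (ha : ∀ s t, a s t = 1 - κ₁ s * A t)
    (hb : ∀ s t, b s t = κ₂ s * A t - κ₃ s * B t)
    (K : ℝ → ℝ → ℝ)
    (hK : ∀ s t, K s t =
      ((a s t ^ 2 + b s t ^ 2) * (deriv A t * deriv (deriv B) t - deriv B t * deriv (deriv A) t) *
          (deriv A t * b s t * κ₃ s - deriv B t * (κ₁ s * a s t - κ₂ s * b s t)) -
        ((deriv A t) ^ 2 + (deriv B t) ^ 2) *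
          (a s t * deriv (fun τ => b s τ) t - b s t * deriv (fun τ => a s τ) t) ^ 2) /
        ((a s t ^ 2 + b s t ^ 2) * ((deriv A t) ^ 2 + (deriv B t) ^ 2)) ^ 2) :
    ∀ s t, c₁ * sin t - c₂ * cos t ≠ 0 →
      2 * (deriv r t) ^ 2 - r t * deriv (deriv r) t + (r t) ^ 2 = 0 ∧
      κ₁ s * κ₃ s * (r t) ^ 2 + (deriv r t * κ₂ s - r t * κ₃ s) * cos t -
        (deriv r t * κ₃ s + r t * κ₂ s) * sin t = 0 ∧
      K s t = 0 := by
  intro s t ht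
  have hκ' : κ₃ s * (c₂ + κ₁ s) = c₁ * κ₂ s := by rw [hκ₃, div_mul_cancel₀ _ (hκ s)]
  obtain rfl : r = fun x => (c₁ * sin x - c₂ * cos x)⁻¹ := funext hr
  obtain rfl : A = fun x => cos x / (c₁ * sin x - c₂ * cos x) :=
    funext fun x => by rw [hA, div_eq_inv_mul, mul_comm]
  obtain rfl : B = fun x => sin x / (c₁ * sin x - c₂ * cos x) :=
    funext fun x => by rw [hB, div_eq_inv_mul, mul_comm]
  have hab : a s t * deriv (fun τ => b s τ) t - b s t * deriv (fun τ => a s τ) t = 0 := by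
    simp only [ha, hb]
    exact pencil_wronskian_cos_div_sin_div_eq_zero ht hκ'
  refine ⟨deriv_inv_ode_of_harmonic (hasDerivAt_sin_sub_cos c₁ c₂) (hasDerivAt_cos_add_sin c₁ c₂) ht,
    inv_sin_sub_cos_second_flatness ht hκ', ?_⟩
  rw [hK, deriv_cos_div_mul_deriv_deriv_sin_div_sub_eq_zero ht, hab]
  simp
end
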